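/- With the notation of the Ostrowski expansion, if b_ℓ ≥ 1 then 1 − |ε_ℓ(N)| ≥ c/a_{ℓ+2} for an absolute constant c > 0; moreover if additionally b_{ℓ+1} ≤ a_{ℓ+2}/2, then 1 − |ε_ℓ(N)| ≥ c' for an absolute constant c' > 0. -/

import Mathlib

open Real Filter MeasureTheory

/-- Gauss map -/
noncomputable def gaussMap (x : ℝ) : ℝ := Int.fract x⁻¹

/-- Continued fraction partial quotients of α ∈ (0,1): `cfA α k` is `a_k` for `k ≥ 1`. -/
noncomputable def cfA (α : ℝ) : ℕ → ℕ
  | 0 => 0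
  | n + 1 => (⌊(gaussMap^[n] α)⁻¹⌋).toNat

/-- Denominators of the convergents: `q_0 = 1`, `q_1 = a_1`, `q_{k+2} = a_{k+2} q_{k+1} + q_k`. -/
noncomputable def cfQ (α : ℝ) : ℕ → ℕ
  | 0 => 1
  | 1 => cfA α 1
  | n + 2 => cfA α (n + 2) * cfQ α (n + 1) + cfQ α n

/-- Numerators of the convergents. -/
noncomputable def cfP (α : ℝ) : ℕ → ℤ
  | 0 => 0
  | 1 => 1
  | n + 2 => cfA α (n + 2) * cfP α (n + 1) + cfP α n

/-- `δ_k = |q_k α - p_k| = ‖q_k α‖`. -/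
noncomputable def cfDelta (α : ℝ) (k : ℕ) : ℝ := |(cfQ α k : ℝ) * α - (cfP α k : ℝ)|

/-- Sudler product `P_N(α) = ∏_{r=1}^N |2 sin(π r α)|`. -/
noncomputable def sudler (α : ℝ) (N : ℕ) : ℝ :=
  ∏ r ∈ Finset.Icc 1 N, |2 * Real.sin (Real.pi * r * α)|

/-- Ostrowski digit conditions for a digit sequence `b` of length `K` w.r.t. `α`. -/
def IsOstrowski (α : ℝ) (K : ℕ) (b : ℕ → ℕ) (N : ℕ) : Prop :=
  N = ∑ ℓ ∈ Finset.range K, b ℓ * cfQ α ℓ ∧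
  (∀ ℓ < K, b ℓ ≤ cfA α (ℓ + 1)) ∧
  b 0 < cfA α 1 ∧
  (∀ ℓ, 1 ≤ ℓ → ℓ < K → b ℓ = cfA α (ℓ + 1) → b (ℓ - 1) = 0)

/-- `ε_ℓ(N) = q_ℓ ∑_{k=ℓ+1}^{K-1} (-1)^{k+ℓ} b_k δ_k`. -/
noncomputable def cfEps (α : ℝ) (K : ℕ) (b : ℕ → ℕ) (ℓ : ℕ) : ℝ :=
  (cfQ α ℓ : ℝ) * ∑ k ∈ Finset.Ico (ℓ + 1) K, (-1 : ℝ) ^ (k + ℓ) * (b k : ℝ) * cfDelta α k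

/-!
Let `x_n = G^n(α)` be the Gauss-map orbit of `α` and `β_n = x_0 x_1 ⋯ x_n`. The identity
`x_n x_{n+1} = 1 - a_{n+1} x_n` gives `β_n = a_{n+2} β_{n+1} + β_{n+2}`, whence
`q_n α - p_n = (-1)^n β_n`; so `δ_n = β_n` satisfies this recursion, and
`q_{n+1} δ_n + q_n δ_{n+1} = 1`.

Up to the factor `-q_ℓ`, `ε_ℓ(N)` is the alternating tail `T_{ℓ+1}`, where
`T_m = ∑_{k ≥ m} (-1)^(k+m) b_k δ_k`; as the digits are bounded by the partial quotients,
`-δ_m ≤ T_m ≤ b_m δ_m + δ_{m+1}`. Since `b_ℓ ≥ 1`, the Ostrowski rule gives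
`b_{ℓ+1} ≤ a_{ℓ+2} - 1`. Expanding `1 = q_{ℓ+1} δ_ℓ + q_ℓ δ_{ℓ+1}` with the recursion yields
`1 - |ε_ℓ(N)| ≥ (a_{ℓ+2} - b_{ℓ+1}) q_{ℓ+1} δ_{ℓ+1}`, and `q_{ℓ+1} δ_{ℓ+1} ≥ 1 / (a_{ℓ+2} + 2)`.
-/

lemma irrational_gaussMap {x : ℝ} (hx : Irrational x) : Irrational (gaussMap x) :=
  hx.inv.sub_intCast _

lemma gaussMap_pos_of_irrational {x : ℝ} (hx : Irrational x) : 0 < gaussMap x :=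
  (Int.fract_nonneg _).lt_of_ne fun h => irrational_gaussMap hx ⟨0, by rw [gaussMap, ← h]; simp⟩

lemma irrational_gaussMap_iterate {x : ℝ} (hx : Irrational x) (n : ℕ) :
    Irrational (gaussMap^[n] x) := by
  induction n with
  | zero => exact hx
  | succ n ih => rw [Function.iterate_succ_apply']; exact irrational_gaussMap ih

lemma gaussMap_iterate_lt_one {x : ℝ} (hx : x < 1) (n : ℕ) : gaussMap^[n] x < 1 := by
  cases n with
  | zero => exact hx
  | succ n => rw [Function.iterate_succ_apply']; exact Int.fract_lt_one _

noncomputable def cfBeta (α : ℝ) (n : ℕ) : ℝ := ∏ i ∈ Finset.range (n + 1), gaussMap^[i] α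

lemma cfBeta_zero (α : ℝ) : cfBeta α 0 = α := by simp [cfBeta]

lemma cfBeta_succ (α : ℝ) (n : ℕ) : cfBeta α (n + 1) = cfBeta α n * gaussMap^[n + 1] α :=
  Finset.prod_range_succ _ _

noncomputable def cfAltTail (α : ℝ) (K : ℕ) (b : ℕ → ℕ) (m : ℕ) : ℝ :=
  ∑ k ∈ Finset.Ico m K, (-1 : ℝ) ^ (k + m) * b k * cfDelta α k

section AltTail

variable {α : ℝ} {K : ℕ} {b : ℕ → ℕ}

lemma cfAltTail_of_le {m : ℕ} (h : K ≤ m) : cfAltTail α K b m = 0 := by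
  rw [cfAltTail, Finset.Ico_eq_empty_of_le h, Finset.sum_empty]

lemma cfAltTail_of_lt {m : ℕ} (h : m < K) :
    cfAltTail α K b m = b m * cfDelta α m - cfAltTail α K b (m + 1) := by
  rw [cfAltTail, Finset.sum_eq_sum_Ico_succ_bot h, cfAltTail, sub_eq_add_neg,
    ← Finset.sum_neg_distrib, ← two_mul, pow_mul, neg_one_sq, one_pow, one_mul]
  congr 1
  refine Finset.sum_congr rfl fun k _ => ?_
  rw [← add_assoc, pow_succ]
  ring

lemma cfEps_eq_neg_mul_cfAltTail (ℓ : ℕ) :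
    cfEps α K b ℓ = -(cfQ α ℓ * cfAltTail α K b (ℓ + 1)) := by
  rw [cfEps, cfAltTail, ← mul_neg, ← Finset.sum_neg_distrib]
  congr 1
  refine Finset.sum_congr rfl fun k _ => ?_
  rw [← add_assoc, pow_succ]
  ring

end AltTail

lemma IsOstrowski.digit_succ_lt {α : ℝ} {K N ℓ : ℕ} {b : ℕ → ℕ} (ho : IsOstrowski α K b N)
    (hℓ : ℓ + 1 < K) (hb : 1 ≤ b ℓ) : b (ℓ + 1) < cfA α (ℓ + 2) :=
  (ho.2.1 _ hℓ).lt_of_ne fun h => by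
    have := ho.2.2.2 (ℓ + 1) (Nat.le_add_left 1 ℓ) hℓ h
    simp only [Nat.add_sub_cancel] at this
    omega

section ContinuedFraction

variable {α : ℝ} (hα : α ∈ Set.Ioo (0 : ℝ) 1) (hirr : Irrational α)
include hα hirr

lemma gaussMap_iterate_pos (n : ℕ) : 0 < gaussMap^[n] α := by
  cases n with
  | zero => exact hα.1
  | succ n =>
    rw [Function.iterate_succ_apply']
    exact gaussMap_pos_of_irrational (irrational_gaussMap_iterate hirr n)

lemma one_lt_inv_gaussMap_iterate (n : ℕ) : 1 < (gaussMap^[n] α)⁻¹ :=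
  (one_lt_inv₀ (gaussMap_iterate_pos hα hirr n)).2 (gaussMap_iterate_lt_one hα.2 n)

lemma cfA_succ_eq_floor (n : ℕ) : (cfA α (n + 1) : ℤ) = ⌊(gaussMap^[n] α)⁻¹⌋ :=
  Int.toNat_of_nonneg <|
    Int.floor_nonneg.2 (zero_le_one.trans (one_lt_inv_gaussMap_iterate hα hirr n).le)

lemma one_le_cfA (n : ℕ) : 1 ≤ cfA α (n + 1) := by
  have h : (1 : ℤ) ≤ ⌊(gaussMap^[n] α)⁻¹⌋ :=
    Int.le_floor.2 (by exact_mod_cast (one_lt_inv_gaussMap_iterate hα hirr n).le)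
  rw [← cfA_succ_eq_floor hα hirr] at h
  exact_mod_cast h

lemma gaussMap_iterate_mul_succ (n : ℕ) :
    gaussMap^[n] α * gaussMap^[n + 1] α = 1 - cfA α (n + 1) * gaussMap^[n] α := by
  have hx := (gaussMap_iterate_pos hα hirr n).ne'
  have hfloor : ((cfA α (n + 1) : ℤ) : ℝ) = ⌊(gaussMap^[n] α)⁻¹⌋ := by
    rw [cfA_succ_eq_floor hα hirr]
  rw [Function.iterate_succ_apply', gaussMap, Int.fract, ← hfloor]
  push_cast
  field_simp

lemma cfBeta_pos (n : ℕ) : 0 < cfBeta α n :=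
  Finset.prod_pos fun i _ => gaussMap_iterate_pos hα hirr i

lemma cfA_one_mul_cfBeta_zero_add : cfA α 1 * cfBeta α 0 + cfBeta α 1 = 1 := by
  have h := gaussMap_iterate_mul_succ hα hirr 0
  rw [cfBeta_succ, cfBeta_zero]
  simp only [Function.iterate_zero, id] at h
  linear_combination h

lemma cfBeta_eq_cfA_mul_add (n : ℕ) :
    cfBeta α n = cfA α (n + 2) * cfBeta α (n + 1) + cfBeta α (n + 2) := by
  have h := gaussMap_iterate_mul_succ hα hirr (n + 1)
  rw [cfBeta_succ α (n + 1), cfBeta_succ α n]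
  linear_combination -cfBeta α n * h

lemma cfQ_mul_sub_cfP (n : ℕ) : (cfQ α n : ℝ) * α - cfP α n = (-1) ^ n * cfBeta α n := by
  induction n using Nat.strong_induction_on with
  | _ n ih =>
    match n with
    | 0 => simp [cfQ, cfP, cfBeta]
    | 1 =>
      have h := cfA_one_mul_cfBeta_zero_add hα hirr
      rw [cfBeta_zero] at h
      simp only [cfQ, cfP]
      push_cast
      linear_combination h
    | m + 2 =>
      simp only [cfQ, cfP]
      push_cast
      linear_combination (cfA α (m + 2) : ℝ) * ih (m + 1) (by omega) + ih m (by omega)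
        + (-1) ^ m * cfBeta_eq_cfA_mul_add hα hirr m

lemma cfDelta_eq_cfBeta (n : ℕ) : cfDelta α n = cfBeta α n := by
  rw [cfDelta, cfQ_mul_sub_cfP hα hirr, abs_mul, abs_pow, abs_neg, abs_one, one_pow, one_mul,
    abs_of_pos (cfBeta_pos hα hirr n)]

lemma cfDelta_pos (n : ℕ) : 0 < cfDelta α n :=
  cfDelta_eq_cfBeta hα hirr n ▸ cfBeta_pos hα hirr n

lemma cfDelta_eq_cfA_mul_add (n : ℕ) :
    cfDelta α n = cfA α (n + 2) * cfDelta α (n + 1) + cfDelta α (n + 2) := by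
  simp only [cfDelta_eq_cfBeta hα hirr]
  exact cfBeta_eq_cfA_mul_add hα hirr n

lemma cfDelta_succ_le (n : ℕ) : cfDelta α (n + 1) ≤ cfDelta α n := by
  have ha : (1 : ℝ) ≤ cfA α (n + 2) := by exact_mod_cast one_le_cfA hα hirr (n + 1)
  nlinarith [cfDelta_eq_cfA_mul_add hα hirr n, cfDelta_pos hα hirr (n + 1),
    cfDelta_pos hα hirr (n + 2)]

lemma cfQ_succ_mul_cfDelta_add (n : ℕ) :
    (cfQ α (n + 1) : ℝ) * cfDelta α n + cfQ α n * cfDelta α (n + 1) = 1 := by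
  induction n with
  | zero =>
    simp only [cfQ, Nat.cast_one, one_mul, cfDelta_eq_cfBeta hα hirr]
    exact cfA_one_mul_cfBeta_zero_add hα hirr
  | succ n ih =>
    rw [show cfQ α (n + 2) = cfA α (n + 2) * cfQ α (n + 1) + cfQ α n from rfl]
    push_cast
    linear_combination ih - (cfQ α (n + 1) : ℝ) * cfDelta_eq_cfA_mul_add hα hirr n

lemma cfQ_le_cfQ_succ (n : ℕ) : cfQ α n ≤ cfQ α (n + 1) := by
  cases n with
  | zero => exact one_le_cfA hα hirr 0
  | succ n =>
    show cfQ α (n + 1) ≤ cfA α (n + 2) * cfQ α (n + 1) + cfQ α n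
    nlinarith [one_le_cfA hα hirr (n + 1)]

lemma cfQ_succ_le (n : ℕ) : cfQ α (n + 1) ≤ (cfA α (n + 1) + 1) * cfQ α n := by
  cases n with
  | zero => simp [cfQ]
  | succ n =>
    show cfA α (n + 2) * cfQ α (n + 1) + cfQ α n ≤ _
    nlinarith [cfQ_le_cfQ_succ hα hirr n]

lemma one_div_cfA_add_two_le_cfQ_mul_cfDelta (n : ℕ) :
    1 / (cfA α (n + 1) + 2 : ℝ) ≤ cfQ α n * cfDelta α n := by
  have hq : (cfQ α (n + 1) : ℝ) ≤ (cfA α (n + 1) + 1) * cfQ α n := by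
    exact_mod_cast cfQ_succ_le hα hirr n
  have hδ := cfDelta_succ_le hα hirr n
  have hpos := cfDelta_pos hα hirr n
  rw [div_le_iff₀ (by positivity)]
  nlinarith [cfQ_succ_mul_cfDelta_add hα hirr n, mul_le_mul_of_nonneg_right hq hpos.le,
    mul_le_mul_of_nonneg_left hδ (Nat.cast_nonneg (cfQ α n))]

lemma cfAltTail_bounds {K : ℕ} {b : ℕ → ℕ} (hb : ∀ k < K, b k ≤ cfA α (k + 1)) (m : ℕ) :
    -cfDelta α m ≤ cfAltTail α K b m ∧
      cfAltTail α K b m ≤ b m * cfDelta α m + cfDelta α (m + 1) := by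
  have hδ := cfDelta_pos hα hirr m
  by_cases hm : m < K
  · have hnext_lo := (cfAltTail_bounds hb (m + 1)).1
    have hnext_hi : cfAltTail α K b (m + 1) ≤ cfDelta α m := by
      by_cases hm' : m + 1 < K
      · have hbA : (b (m + 1) : ℝ) ≤ cfA α (m + 2) := by exact_mod_cast hb _ hm'
        nlinarith [(cfAltTail_bounds hb (m + 1)).2, cfDelta_eq_cfA_mul_add hα hirr m,
          mul_le_mul_of_nonneg_right hbA (cfDelta_pos hα hirr (m + 1)).le]
      · rw [cfAltTail_of_le (not_lt.1 hm')]
        exact hδ.le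
    have hbδ : 0 ≤ (b m : ℝ) * cfDelta α m := by positivity
    rw [cfAltTail_of_lt hm]
    constructor <;> linarith
  · rw [cfAltTail_of_le (not_lt.1 hm)]
    have := cfDelta_pos hα hirr (m + 1)
    exact ⟨by linarith, by positivity⟩
termination_by K - m

lemma div_le_one_sub_cfQ_mul_abs {ℓ : ℕ} {d y : ℝ} (hd : 0 ≤ d) (hdA : d ≤ cfA α (ℓ + 2))
    (hlo : -cfDelta α (ℓ + 1) ≤ y) (hhi : y ≤ d * cfDelta α (ℓ + 1) + cfDelta α (ℓ + 2)) :
    (cfA α (ℓ + 2) - d) / (cfA α (ℓ + 2) + 2) ≤ 1 - cfQ α ℓ * |y| := by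
  have hunit := cfQ_succ_mul_cfDelta_add hα hirr ℓ
  rw [cfDelta_eq_cfA_mul_add hα hirr ℓ] at hunit
  have hq : (cfQ α ℓ : ℝ) ≤ cfQ α (ℓ + 1) := by exact_mod_cast cfQ_le_cfQ_succ hα hirr ℓ
  have hq0 : (0 : ℝ) ≤ cfQ α ℓ := Nat.cast_nonneg _
  have hδ₁ := cfDelta_pos hα hirr (ℓ + 1)
  have hδ₂ := cfDelta_pos hα hirr (ℓ + 2)
  have hmain :
      (cfA α (ℓ + 2) - d) * (cfQ α (ℓ + 1) * cfDelta α (ℓ + 1)) ≤ 1 - cfQ α ℓ * |y| := by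
    rcases abs_cases y with ⟨hy, -⟩ | ⟨hy, -⟩ <;> rw [hy]
    · have hbound : 0 ≤ d * cfDelta α (ℓ + 1) + cfDelta α (ℓ + 2) := by positivity
      nlinarith [mul_nonneg hq0 (sub_nonneg.2 hhi), mul_nonneg (sub_nonneg.2 hq) hbound,
        mul_nonneg hq0 hδ₁.le]
    · have hq1 : (0 : ℝ) ≤ cfQ α (ℓ + 1) := Nat.cast_nonneg _
      nlinarith [mul_nonneg hq0 (neg_le_iff_add_nonneg.1 hlo), mul_nonneg hq1 hδ₂.le,
        mul_nonneg hd (mul_nonneg hq1 hδ₁.le)]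
  calc (cfA α (ℓ + 2) - d) / (cfA α (ℓ + 2) + 2)
      = (cfA α (ℓ + 2) - d) * (1 / (cfA α (ℓ + 1 + 1) + 2)) := by ring
    _ ≤ (cfA α (ℓ + 2) - d) * (cfQ α (ℓ + 1) * cfDelta α (ℓ + 1)) :=
      mul_le_mul_of_nonneg_left (one_div_cfA_add_two_le_cfQ_mul_cfDelta hα hirr (ℓ + 1))
        (sub_nonneg.2 hdA)
    _ ≤ 1 - cfQ α ℓ * |y| := hmain

lemma exists_sub_div_le_one_sub_abs_cfEps {K N ℓ : ℕ} {b : ℕ → ℕ} (ho : IsOstrowski α K b N)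
    (hbℓ : 1 ≤ b ℓ) :
    ∃ d : ℝ, d + 1 ≤ cfA α (ℓ + 2) ∧ d ≤ b (ℓ + 1) ∧
      (cfA α (ℓ + 2) - d) / (cfA α (ℓ + 2) + 2) ≤ 1 - |cfEps α K b ℓ| := by
  have hA : (1 : ℝ) ≤ cfA α (ℓ + 2) := by exact_mod_cast one_le_cfA hα hirr (ℓ + 1)
  have htail := cfAltTail_bounds hα hirr ho.2.1 (ℓ + 1)
  rw [cfEps_eq_neg_mul_cfAltTail, abs_neg, abs_mul, Nat.abs_cast]
  by_cases hK : ℓ + 1 < K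
  · have hlt : (b (ℓ + 1) : ℝ) + 1 ≤ cfA α (ℓ + 2) := by
      exact_mod_cast ho.digit_succ_lt hK hbℓ
    exact ⟨b (ℓ + 1), hlt, le_rfl,
      div_le_one_sub_cfQ_mul_abs hα hirr (by positivity) (by linarith) htail.1 htail.2⟩
  · have hδ := cfDelta_pos hα hirr (ℓ + 2)
    refine ⟨0, by linarith, by positivity,
      div_le_one_sub_cfQ_mul_abs hα hirr le_rfl (by linarith) htail.1 ?_⟩
    rw [cfAltTail_of_le (not_lt.1 hK), zero_mul, zero_add]
    exact hδ.le

end ContinuedFraction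

theorem eps_away_from_singularity :
    ∃ c : ℝ, 0 < c ∧ ∃ c' : ℝ, 0 < c' ∧
    ∀ α : ℝ, α ∈ Set.Ioo (0:ℝ) 1 → Irrational α →
    ∀ K N : ℕ, ∀ b : ℕ → ℕ, IsOstrowski α K b N →
    ∀ ℓ < K, 1 ≤ b ℓ →
      c / (cfA α (ℓ+2) : ℝ) ≤ 1 - |cfEps α K b ℓ| ∧
      ((b (ℓ+1) : ℝ) ≤ (cfA α (ℓ+2) : ℝ) / 2 → c' ≤ 1 - |cfEps α K b ℓ|) := by
  refine ⟨1 / 3, by norm_num, 1 / 6, by norm_num, ?_⟩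
  intro α hα hirr K N b ho ℓ _ hbℓ
  have hA : (1 : ℝ) ≤ cfA α (ℓ + 2) := by exact_mod_cast one_le_cfA hα hirr (ℓ + 1)
  obtain ⟨d, hdA, hdb, hgap⟩ := exists_sub_div_le_one_sub_abs_cfEps hα hirr ho hbℓ
  set A : ℝ := (cfA α (ℓ + 2) : ℝ)
  constructor
  · calc 1 / 3 / A ≤ 1 / (A + 2) := by
          rw [div_div, one_div_le_one_div (by positivity) (by positivity)]; linarith
      _ ≤ (A - d) / (A + 2) := by gcongr; linarith
      _ ≤ _ := hgap
  · intro hhalf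
    calc (1 : ℝ) / 6 ≤ (A - A / 2) / (A + 2) := by rw [le_div_iff₀ (by positivity)]; linarith
      _ ≤ (A - d) / (A + 2) := by gcongr; linarith
      _ ≤ _ := hgap
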